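/- arXiv:2512.07013 — 3 statements merged into one kernel-verified Lean document; each statement's English description precedes it below -/
import Mathlib

section
/- Let a ≥ 0 and c ≠ 0 be real numbers. Then ∫ (max(0, a + c·x))² d(gaussianReal 0 1)(x) = (a² + c²)·(1 − Φ(−a/|c|)) + a·|c|·φ(−a/|c|). -/
open Filter Finset MeasureTheory ProbabilityTheory

/-- The cumulative distribution function of the standard Gaussian measure on `ℝ`. -/
noncomputable def gaussCDF (x : ℝ) : ℝ :=
  ((gaussianReal 0 1) (Set.Iic x)).toReal

/-- The density of the standard Gaussian measure on `ℝ`. -/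
noncomputable def gaussPDF (x : ℝ) : ℝ :=
  Real.exp (-x ^ 2 / 2) / Real.sqrt (2 * Real.pi)


/-!
For `c > 0` the integrand vanishes left of `t = -a / c`, so the integral is
`∫ₜ^∞ (a + c x)² φ(x) dx`. Since `φ' = -x φ`, the truncated moments are
`∫ₜ^∞ φ = 1 - Φ(t)`, `∫ₜ^∞ x φ = φ(t)` and, integrating by parts, `∫ₜ^∞ x² φ = t φ(t) + 1 - Φ(t)`;
expanding the square gives `(a² + c²)(1 - Φ(t)) + c (c t + 2a) φ(t)`, and `c (c t + 2a) = a c`.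
The case `c < 0` reduces to `|c|` because the standard Gaussian is invariant under `x ↦ -x`.
-/

open Set Topology

lemma gaussianPDFReal_zero_one : gaussianPDFReal 0 1 = gaussPDF := by
  funext x
  simp only [gaussianPDFReal, gaussPDF, NNReal.coe_one, mul_one, sub_zero]
  ring

lemma integral_gaussianReal_eq_integral_mul_gaussPDF (f : ℝ → ℝ) :
    ∫ x, f x ∂gaussianReal 0 1 = ∫ x, f x * gaussPDF x := by
  simp [integral_gaussianReal_eq_integral_smul one_ne_zero, gaussianPDFReal_zero_one, mul_comm]

lemma integral_comp_neg_gaussianReal {E : Type*} [NormedAddCommGroup E] [NormedSpace ℝ E]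
    (v : NNReal) (f : ℝ → E) :
    ∫ x, f (-x) ∂gaussianReal 0 v = ∫ x, f x ∂gaussianReal 0 v := by
  have h : MeasurePreserving (MeasurableEquiv.neg ℝ) (gaussianReal 0 v) (gaussianReal 0 v) :=
    ⟨measurable_neg, by simpa using gaussianReal_map_neg (μ := 0) (v := v)⟩
  exact h.integral_comp' f

lemma gaussPDF_eq_mul_exp (x : ℝ) :
    gaussPDF x = (Real.sqrt (2 * Real.pi))⁻¹ * Real.exp (-2⁻¹ * x ^ 2) := by
  rw [gaussPDF, div_eq_inv_mul]
  ring_nf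

lemma hasDerivAt_gaussPDF (x : ℝ) : HasDerivAt gaussPDF (-x * gaussPDF x) x := by
  have hexponent : HasDerivAt (fun x : ℝ => -x ^ 2 / 2) (-x) x :=
    ((hasDerivAt_pow 2 x).neg.div_const 2).congr_deriv (by norm_num; ring)
  exact (hexponent.exp.div_const _).congr_deriv (by rw [gaussPDF]; ring)

lemma integrable_pow_mul_gaussPDF (n : ℕ) : Integrable fun x => x ^ n * gaussPDF x := by
  have h := (integrable_rpow_mul_exp_neg_mul_sq (b := 2⁻¹) (by norm_num)
    (s := n) (by linarith [n.cast_nonneg (α := ℝ)])).const_mul (Real.sqrt (2 * Real.pi))⁻¹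
  refine h.congr (ae_of_all _ fun x => ?_)
  simp only [Real.rpow_natCast, gaussPDF_eq_mul_exp]
  ring

lemma tendsto_pow_mul_gaussPDF_atTop (n : ℕ) :
    Tendsto (fun x => x ^ n * gaussPDF x) atTop (𝓝 0) := by
  have hexp : Tendsto (fun x : ℝ => Real.exp (-(1 / 2) * x)) atTop (𝓝 0) :=
    Real.tendsto_exp_atBot.comp (tendsto_id.const_mul_atTop_of_neg (by norm_num))
  have h := ((rpow_mul_exp_neg_mul_sq_isLittleO_exp_neg (b := 2⁻¹) (by norm_num) n).trans_tendsto
    hexp).const_mul (Real.sqrt (2 * Real.pi))⁻¹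
  rw [mul_zero] at h
  refine h.congr fun x => ?_
  simp only [Real.rpow_natCast, gaussPDF_eq_mul_exp]
  ring

lemma integrable_gaussPDF : Integrable gaussPDF := by
  simpa using integrable_pow_mul_gaussPDF 0

lemma gaussCDF_eq_setIntegral (t : ℝ) : gaussCDF t = ∫ x in Iic t, gaussPDF x := by
  rw [gaussCDF, gaussianReal_apply_eq_integral 0 one_ne_zero, ENNReal.toReal_ofReal
    (setIntegral_nonneg measurableSet_Iic fun x _ => gaussianPDFReal_nonneg 0 1 x),
    gaussianPDFReal_zero_one]

lemma integral_Ioi_gaussPDF (t : ℝ) : ∫ x in Ioi t, gaussPDF x = 1 - gaussCDF t := by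
  have h := integral_add_compl (measurableSet_Iic (a := t)) integrable_gaussPDF
  rw [compl_Iic, ← gaussianPDFReal_zero_one, integral_gaussianPDFReal_eq_one 0 one_ne_zero,
    gaussianPDFReal_zero_one] at h
  rw [gaussCDF_eq_setIntegral]
  linarith

lemma integral_Ioi_mul_gaussPDF (t : ℝ) : ∫ x in Ioi t, x * gaussPDF x = gaussPDF t := by
  have hint : IntegrableOn (fun x => -(-x * gaussPDF x)) (Ioi t) := by
    simpa using (integrable_pow_mul_gaussPDF 1).integrableOn
  have hlim : Tendsto (fun x => -gaussPDF x) atTop (𝓝 0) := by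
    simpa using (tendsto_pow_mul_gaussPDF_atTop 0).neg
  simpa using integral_Ioi_of_hasDerivAt_of_tendsto'
    (fun x _ => (hasDerivAt_gaussPDF x).neg) hint hlim

lemma integral_Ioi_sq_mul_gaussPDF (t : ℝ) :
    ∫ x in Ioi t, x ^ 2 * gaussPDF x = t * gaussPDF t + (1 - gaussCDF t) := by
  have hderiv (x : ℝ) : HasDerivAt (fun x => -(x * gaussPDF x))
      (x ^ 2 * gaussPDF x - gaussPDF x) x :=
    ((hasDerivAt_id' x).mul (hasDerivAt_gaussPDF x)).neg.congr_deriv (by ring)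
  have hint : IntegrableOn (fun x => x ^ 2 * gaussPDF x - gaussPDF x) (Ioi t) :=
    ((integrable_pow_mul_gaussPDF 2).sub integrable_gaussPDF).integrableOn
  have hlim : Tendsto (fun x => -(x * gaussPDF x)) atTop (𝓝 0) := by
    simpa using (tendsto_pow_mul_gaussPDF_atTop 1).neg
  have h := integral_Ioi_of_hasDerivAt_of_tendsto' (fun x _ => hderiv x) hint hlim
  rw [integral_sub (integrable_pow_mul_gaussPDF 2).integrableOn integrable_gaussPDF.integrableOn,
    integral_Ioi_gaussPDF] at h
  linarith

lemma integral_Ioi_sq_add_mul_mul_gaussPDF (a c t : ℝ) :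
    ∫ x in Ioi t, (a + c * x) ^ 2 * gaussPDF x =
      (a ^ 2 + c ^ 2) * (1 - gaussCDF t) + c * (c * t + 2 * a) * gaussPDF t := by
  have hint (n : ℕ) (r : ℝ) : IntegrableOn (fun x => r * (x ^ n * gaussPDF x)) (Ioi t) :=
    ((integrable_pow_mul_gaussPDF n).const_mul r).integrableOn
  calc ∫ x in Ioi t, (a + c * x) ^ 2 * gaussPDF x
      = ∫ x in Ioi t, (a ^ 2 * (x ^ 0 * gaussPDF x) + 2 * a * c * (x ^ 1 * gaussPDF x)) +
          c ^ 2 * (x ^ 2 * gaussPDF x) := by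
        congr 1 with x
        ring
    _ = a ^ 2 * (∫ x in Ioi t, gaussPDF x) + 2 * a * c * (∫ x in Ioi t, x * gaussPDF x) +
          c ^ 2 * (∫ x in Ioi t, x ^ 2 * gaussPDF x) := by
        rw [integral_add (by exact (hint 0 _).add (hint 1 _)) (hint 2 _),
          integral_add (hint 0 _) (hint 1 _)]
        simp only [integral_const_mul, pow_zero, one_mul, pow_one]
    _ = _ := by
        rw [integral_Ioi_gaussPDF, integral_Ioi_mul_gaussPDF, integral_Ioi_sq_mul_gaussPDF]
        ring

lemma sq_max_zero_add_mul_eq_indicator {a c : ℝ} (hc : 0 < c) (x : ℝ) :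
    max 0 (a + c * x) ^ 2 = (Ioi (-a / c)).indicator (fun x => (a + c * x) ^ 2) x := by
  by_cases hx : x ∈ Ioi (-a / c)
  · rw [indicator_of_mem hx, max_eq_right]
    have := (div_lt_iff₀ hc).1 (Set.mem_Ioi.1 hx)
    linarith
  · rw [indicator_of_notMem hx, max_eq_left]
    · ring
    have := (le_div_iff₀ hc).1 (not_lt.1 (mt Set.mem_Ioi.2 hx))
    linarith

lemma integral_sq_max_zero_add_mul_gaussianReal_of_pos (a : ℝ) {c : ℝ} (hc : 0 < c) :
    ∫ x, max 0 (a + c * x) ^ 2 ∂gaussianReal 0 1 =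
      (a ^ 2 + c ^ 2) * (1 - gaussCDF (-a / c)) + a * c * gaussPDF (-a / c) := by
  have hindicator (x : ℝ) : max 0 (a + c * x) ^ 2 * gaussPDF x =
      (Ioi (-a / c)).indicator (fun x => (a + c * x) ^ 2 * gaussPDF x) x := by
    rw [sq_max_zero_add_mul_eq_indicator hc, indicator_mul_left]
  simp_rw [integral_gaussianReal_eq_integral_mul_gaussPDF, hindicator,
    integral_indicator measurableSet_Ioi, integral_Ioi_sq_add_mul_mul_gaussPDF]
  field_simp
  ring

lemma integral_sq_max_zero_add_mul_gaussianReal_abs (a c : ℝ) :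
    ∫ x, max 0 (a + c * x) ^ 2 ∂gaussianReal 0 1 =
      ∫ x, max 0 (a + |c| * x) ^ 2 ∂gaussianReal 0 1 := by
  rcases le_or_gt 0 c with hc | hc
  · rw [abs_of_nonneg hc]
  · rw [abs_of_neg hc, ← integral_comp_neg_gaussianReal]
    simp only [neg_mul, mul_neg]

theorem integral_sq_max_zero_add_linear_gaussian_general
    (a c : ℝ) (hc : c ≠ 0) :
    ∫ x, (max 0 (a + c * x)) ^ 2 ∂(gaussianReal 0 1) =
      (a ^ 2 + c ^ 2) * (1 - gaussCDF (-a / |c|)) + a * |c| * gaussPDF (-a / |c|) := by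
  rw [integral_sq_max_zero_add_mul_gaussianReal_abs,
    integral_sq_max_zero_add_mul_gaussianReal_of_pos a (abs_pos.2 hc), sq_abs]

/-- Second moment of the rectified Gaussian: for `a ≥ 0`, `c ≠ 0`,
`∫ (max(0, a + c x))² dN(0,1)(x) = (a² + c²)(1 - Φ(-a/|c|)) + a |c| φ(-a/|c|)`. -/
theorem integral_sq_max_zero_add_linear_gaussian
    (a c : ℝ) (ha : 0 ≤ a) (hc : c ≠ 0) :
    ∫ x, (max 0 (a + c * x)) ^ 2 ∂(gaussianReal 0 1) =
      (a ^ 2 + c ^ 2) * (1 - gaussCDF (-a / |c|)) + a * |c| * gaussPDF (-a / |c|) :=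
  integral_sq_max_zero_add_linear_gaussian_general a c hc
end

section
/- Let ζ₀ ≥ 0, ζ* > 0, γ > 0, σ > 0, and let (A_t), (B_t) be real sequences with A_t > 0 and B_t ≥ 0 for all t, such that A_t → +∞ and B_t → L₂ for some L₂ ≥ 0. Define v̄_t = (ζ₀ + γ·ζ*·B_t)/(1 + γ·B_t), φ̄_t = γ·σ·A_t/(1 + γ·B_t), and E_t = v̄_t·(1 − Φ(−|v̄_t/φ̄_t|)) + |φ̄_t|·φ(−|v̄_t/φ̄_t|). Then E_t → +∞ as t → ∞. -/
open Filter Finset MeasureTheory ProbabilityTheory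

/-!
As `|φ̄_t| → ∞` while `v̄_t` stays bounded, the argument `-|v̄_t / φ̄_t|` tends to `0`, so the term
`|φ̄_t| φ(-|v̄_t / φ̄_t|)` grows like `|φ̄_t| φ(0)`; the other term lies between `-|v̄_t|` and `|v̄_t|`
because `0 ≤ 1 - Φ ≤ 1`.
-/

lemma gaussCDF_le_one (x : ℝ) : gaussCDF x ≤ 1 :=
  ENNReal.toReal_le_of_le_ofReal zero_le_one (by simpa using prob_le_one)

lemma continuous_gaussPDF : Continuous gaussPDF := by
  unfold gaussPDF
  fun_prop

lemma gaussPDF_pos (x : ℝ) : 0 < gaussPDF x := by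
  unfold gaussPDF
  positivity

noncomputable def expectedMAP (v s : ℝ) : ℝ :=
  v * (1 - gaussCDF (-|v / s|)) + |s| * gaussPDF (-|v / s|)

lemma neg_abs_le_expectedMAP_sub (v s : ℝ) :
    -|v| ≤ expectedMAP v s - |s| * gaussPDF (-|v / s|) := by
  have hΦ₀ : 0 ≤ gaussCDF (-|v / s|) := ENNReal.toReal_nonneg
  have hΦ₁ := gaussCDF_le_one (-|v / s|)
  unfold expectedMAP
  nlinarith [neg_abs_le v, abs_nonneg v]

lemma tendsto_expectedMAP_atTop {α : Type*} {l : Filter α} {v s : α → ℝ} {c : ℝ}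
    (hv : Tendsto v l (nhds c)) (hs : Tendsto (fun t => |s t|) l atTop) :
    Tendsto (fun t => expectedMAP (v t) (s t)) l atTop := by
  have hratio : Tendsto (fun t => -|v t / s t|) l (nhds 0) := by
    simpa [abs_div] using (hv.abs.div_atTop hs).neg
  have hdensity : Tendsto (fun t => |s t| * gaussPDF (-|v t / s t|)) l atTop :=
    hs.atTop_mul_pos (gaussPDF_pos 0) ((continuous_gaussPDF.tendsto 0).comp hratio)
  refine tendsto_atTop_mono (fun t => ?_) (hv.abs.neg.add_atTop hdensity)
  linarith [neg_abs_le_expectedMAP_sub (v t) (s t)]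

theorem expected_MAP_limit_case4_general
    (ζ₀ ζs γ σ L₂ : ℝ) (hγ : 0 < γ) (hσ : 0 < σ)
    (A B : ℕ → ℝ)
    (hAtop : Tendsto A atTop atTop) (hL₂ : 0 ≤ L₂)
    (hBlim : Tendsto B atTop (nhds L₂)) :
    Tendsto (fun t =>
        ((ζ₀ + γ * ζs * B t) / (1 + γ * B t)) *
            (1 - gaussCDF (-|((ζ₀ + γ * ζs * B t) / (1 + γ * B t)) /
              (γ * σ * A t / (1 + γ * B t))|)) +
          |γ * σ * A t / (1 + γ * B t)| *
            gaussPDF (-|((ζ₀ + γ * ζs * B t) / (1 + γ * B t)) /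
              (γ * σ * A t / (1 + γ * B t))|))
      atTop atTop := by
  have hD : 0 < 1 + γ * L₂ := by positivity
  have hDlim : Tendsto (fun t => 1 + γ * B t) atTop (nhds (1 + γ * L₂)) :=
    tendsto_const_nhds.add (hBlim.const_mul γ)
  have hmean : Tendsto (fun t => (ζ₀ + γ * ζs * B t) / (1 + γ * B t)) atTop
      (nhds ((ζ₀ + γ * ζs * L₂) / (1 + γ * L₂))) :=
    (tendsto_const_nhds.add (hBlim.const_mul (γ * ζs))).div hDlim hD.ne'
  have hscale : Tendsto (fun t => γ * σ * A t / (1 + γ * B t)) atTop atTop := by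
    simpa only [div_eq_mul_inv] using
      (hAtop.const_mul_atTop (by positivity)).atTop_mul_pos (inv_pos.mpr hD) (hDlim.inv₀ hD.ne')
  exact tendsto_expectedMAP_atTop hmean (tendsto_abs_atTop_atTop.comp hscale)

/-- Case (4) of the convergence of the expected path-dependent
MAP estimator: if `A t → +∞` and `B t → L₂` finite, then `E t → +∞`. -/
theorem expected_MAP_limit_case4
    (ζ₀ ζs γ σ L₂ : ℝ) (hζ₀ : 0 ≤ ζ₀) (hζs : 0 < ζs) (hγ : 0 < γ) (hσ : 0 < σ)
    (A B : ℕ → ℝ) (hA : ∀ t, 0 < A t) (hB : ∀ t, 0 ≤ B t)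
    (hAtop : Tendsto A atTop atTop) (hL₂ : 0 ≤ L₂)
    (hBlim : Tendsto B atTop (nhds L₂)) :
    Tendsto (fun t =>
        ((ζ₀ + γ * ζs * B t) / (1 + γ * B t)) *
            (1 - gaussCDF (-|((ζ₀ + γ * ζs * B t) / (1 + γ * B t)) /
              (γ * σ * A t / (1 + γ * B t))|)) +
          |γ * σ * A t / (1 + γ * B t)| *
            gaussPDF (-|((ζ₀ + γ * ζs * B t) / (1 + γ * B t)) /
              (γ * σ * A t / (1 + γ * B t))|))
      atTop atTop :=
  expected_MAP_limit_case4_general ζ₀ ζs γ σ L₂ hγ hσ A B hAtop hL₂ hBlim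
end

section
/- Let ζ₀ ≥ 0, ζ* > 0, γ > 0, σ > 0, and let (A_t), (B_t) be real sequences with A_t ≠ 0 and B_t ≥ 0 for all t, such that |A_t| → +∞, B_t → +∞, and |(ζ₀ + γ·ζ*·B_t)/(γ·σ·A_t)| → +∞. Define v̄_t = (ζ₀ + γ·ζ*·B_t)/(1 + γ·B_t), φ̄_t = γ·σ·A_t/(1 + γ·B_t), and E_t = v̄_t·(1 − Φ(−|v̄_t/φ̄_t|)) + |φ̄_t|·φ(−|v̄_t/φ̄_t|). Then E_t → ζ* as t → ∞. -/
/-! With `v̄ₜ → ζ*` and `|v̄ₜ/φ̄ₜ| → ∞`, the Gaussian tail probability `Φ(-|v̄ₜ/φ̄ₜ|)` vanishes,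
and `|φ̄ₜ| = |v̄ₜ| / |v̄ₜ/φ̄ₜ| → 0` while the density factor stays bounded, so `Eₜ → ζ*`. Both
hypotheses are read off the data: `v̄ₜ = ζ* + (ζ₀ - ζ*)/(1 + γBₜ)` and
`v̄ₜ/φ̄ₜ = (ζ₀ + γζ*Bₜ)/(γσAₜ)` once `1 + γBₜ ≠ 0`. -/

open Filter Finset MeasureTheory ProbabilityTheory

open scoped Topology

lemma gaussCDF_eq_cdf (x : ℝ) : gaussCDF x = cdf (gaussianReal 0 1) x := by
  rw [gaussCDF, cdf_eq_real, measureReal_def]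

lemma tendsto_gaussCDF_atBot : Tendsto gaussCDF atBot (𝓝 0) := by
  simpa only [funext gaussCDF_eq_cdf] using tendsto_cdf_atBot (gaussianReal 0 1)

lemma gaussPDF_nonneg (x : ℝ) : 0 ≤ gaussPDF x := by
  rw [gaussPDF]; positivity

lemma gaussPDF_le (x : ℝ) : gaussPDF x ≤ (Real.sqrt (2 * Real.pi))⁻¹ := by
  rw [gaussPDF, div_eq_mul_inv]
  refine mul_le_of_le_one_left (by positivity) (Real.exp_le_one_iff.2 ?_)
  nlinarith [sq_nonneg x]

section Limits

variable {α : Type*} {l : Filter α}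

lemma tendsto_zero_of_tendsto_abs_div_atTop {v φ : α → ℝ} {c : ℝ}
    (hv : Tendsto v l (𝓝 c)) (hr : Tendsto (fun t => |v t / φ t|) l atTop) :
    Tendsto φ l (𝓝 0) := by
  have hlim : Tendsto (fun t => |v t| * |v t / φ t|⁻¹) l (𝓝 (|c| * 0)) :=
    hv.abs.mul hr.inv_tendsto_atTop
  rw [mul_zero] at hlim
  refine (tendsto_zero_iff_abs_tendsto_zero _).2 (hlim.congr' ?_)
  filter_upwards [hr.eventually_gt_atTop 0] with t ht
  have hv0 : v t ≠ 0 := (div_ne_zero_iff.1 (abs_pos.1 ht)).1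
  rw [abs_div, inv_div, mul_div_cancel₀ _ (abs_ne_zero.2 hv0), Function.comp_apply]

lemma tendsto_add_mul_div_one_add_atTop {x : α → ℝ} (a b : ℝ)
    (hx : Tendsto x l atTop) : Tendsto (fun t => (a + b * x t) / (1 + x t)) l (𝓝 b) := by
  have hden : Tendsto (fun t => 1 + x t) l atTop := tendsto_atTop_add_const_left _ 1 hx
  have hlim : Tendsto (fun t => b + (a - b) * (1 + x t)⁻¹) l (𝓝 (b + (a - b) * 0)) :=
    tendsto_const_nhds.add (tendsto_const_nhds.mul hden.inv_tendsto_atTop)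
  rw [mul_zero, add_zero] at hlim
  refine hlim.congr' ?_
  filter_upwards [hden.eventually_gt_atTop 0] with t ht
  field_simp
  ring

lemma tendsto_mul_one_sub_gaussCDF_add_abs_mul_gaussPDF {v φ : α → ℝ} {c : ℝ}
    (hv : Tendsto v l (𝓝 c)) (hr : Tendsto (fun t => |v t / φ t|) l atTop) :
    Tendsto (fun t => v t * (1 - gaussCDF (-|v t / φ t|)) + |φ t| * gaussPDF (-|v t / φ t|))
      l (𝓝 c) := by
  have htail : Tendsto (fun t => gaussCDF (-|v t / φ t|)) l (𝓝 0) :=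
    tendsto_gaussCDF_atBot.comp (tendsto_neg_atTop_atBot.comp hr)
  have hpdf : IsBoundedUnder (· ≤ ·) l (fun t => ‖gaussPDF (-|v t / φ t|)‖) :=
    isBoundedUnder_of ⟨_, fun t => by
      simpa [Real.norm_eq_abs, abs_of_nonneg (gaussPDF_nonneg _)] using gaussPDF_le _⟩
  have hdensity : Tendsto (fun t => |φ t| * gaussPDF (-|v t / φ t|)) l (𝓝 0) :=
    ((tendsto_zero_iff_abs_tendsto_zero _).1 (tendsto_zero_of_tendsto_abs_div_atTop hv hr)
      |>.zero_mul_isBoundedUnder_le hpdf)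
  have hlim := (hv.mul ((tendsto_const_nhds (x := (1 : ℝ))).sub htail)).add hdensity
  rwa [sub_zero, mul_one, add_zero] at hlim

end Limits

theorem expected_MAP_limit_case5_general
    (ζ₀ ζs γ σ : ℝ) (hγ : 0 < γ)
    (A B : ℕ → ℝ)
    (hBtop : Tendsto B atTop atTop)
    (hratio : Tendsto (fun t => |(ζ₀ + γ * ζs * B t) / (γ * σ * A t)|) atTop atTop) :
    Tendsto (fun t =>
        ((ζ₀ + γ * ζs * B t) / (1 + γ * B t)) *
            (1 - gaussCDF (-|((ζ₀ + γ * ζs * B t) / (1 + γ * B t)) /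
              (γ * σ * A t / (1 + γ * B t))|)) +
          |γ * σ * A t / (1 + γ * B t)| *
            gaussPDF (-|((ζ₀ + γ * ζs * B t) / (1 + γ * B t)) /
              (γ * σ * A t / (1 + γ * B t))|))
      atTop (nhds ζs) := by
  have hγB : Tendsto (fun t => γ * B t) atTop atTop := hBtop.const_mul_atTop hγ
  have hmean : Tendsto (fun t => (ζ₀ + γ * ζs * B t) / (1 + γ * B t)) atTop (𝓝 ζs) := by
    simpa only [mul_left_comm ζs γ, mul_assoc] using
      tendsto_add_mul_div_one_add_atTop ζ₀ ζs hγB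
  refine tendsto_mul_one_sub_gaussCDF_add_abs_mul_gaussPDF hmean (hratio.congr' ?_)
  filter_upwards [hγB.eventually_gt_atTop (-1)] with t ht
  rw [div_div_div_cancel_right₀ (by linarith)]

/-- Case (5) of the convergence of the expected path-dependent
MAP estimator: if `|A t| → +∞`, `B t → +∞` and
`|(ζ₀ + γ ζ* B t)/(γ σ A t)| → +∞`, then `E t → ζ*`. -/
theorem expected_MAP_limit_case5
    (ζ₀ ζs γ σ : ℝ) (hζ₀ : 0 ≤ ζ₀) (hζs : 0 < ζs) (hγ : 0 < γ) (hσ : 0 < σ)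
    (A B : ℕ → ℝ) (hA : ∀ t, A t ≠ 0) (hB : ∀ t, 0 ≤ B t)
    (hAtop : Tendsto (fun t => |A t|) atTop atTop)
    (hBtop : Tendsto B atTop atTop)
    (hratio : Tendsto (fun t => |(ζ₀ + γ * ζs * B t) / (γ * σ * A t)|) atTop atTop) :
    Tendsto (fun t =>
        ((ζ₀ + γ * ζs * B t) / (1 + γ * B t)) *
            (1 - gaussCDF (-|((ζ₀ + γ * ζs * B t) / (1 + γ * B t)) /
              (γ * σ * A t / (1 + γ * B t))|)) +
          |γ * σ * A t / (1 + γ * B t)| *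
            gaussPDF (-|((ζ₀ + γ * ζs * B t) / (1 + γ * B t)) /
              (γ * σ * A t / (1 + γ * B t))|))
      atTop (nhds ζs) :=
  expected_MAP_limit_case5_general ζ₀ ζs γ σ hγ A B hBtop hratio
end
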